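/- arXiv:0812.3404 — 5 statements merged into one kernel-verified Lean document; each statement's English description precedes it below -/
import Mathlib

section
/- Let $n\ge 1$ and let $\lambda_1\ge\lambda_2\ge\ldots\ge\lambda_n\ge 0$ and $\mu_1\ge\mu_2\ge\ldots\ge\mu_n\ge 0$ be real numbers. Then for every $n\times n$ unitary matrix $U=(u_{jk})$ one has $\sum_{j=1}^n\sum_{k=1}^n \lambda_j\,\mu_k\,|u_{jk}|^2 \ge \sum_{j=1}^n \lambda_j\,\mu_{n+1-j}$, and equality holds for the anti-diagonal permutation matrix $U$ with entries $u_{jk}=\delta_{j+k,n+1}$. In other words, the minimum of $\sum_{j,k}\lambda_j\mu_k|u_{jk}|^2$ over the unitary group $\mathcal U(n)$ equals $\sum_{j=1}^n\lambda_j\mu_{n+1-j}$. -/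
/-!
The matrix `(|u_jk|²)` of a unitary `U` is doubly stochastic, so by Birkhoff's theorem it is a
convex combination of permutation matrices. The target `∑ λ_j μ_k p_jk` is linear in the matrix,
so its value is at least its minimum over permutation matrices, and by the rearrangement
inequality that minimum is attained when the decreasing `λ` is paired with `μ` in reverse order.
-/

open Matrix Equiv

namespace Matrix

variable {n : Type*} [Fintype n] [DecidableEq n]

theorem permMatrix_mem_unitaryGroup {R : Type*} [CommRing R] [StarRing R] (σ : Perm n) :
    σ.permMatrix R ∈ unitaryGroup n R := by
  rw [mem_unitaryGroup_iff', star_eq_conjTranspose, conjTranspose_permMatrix, ← permMatrix_mul,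
    mul_inv_cancel, permMatrix_one]

theorem of_norm_sq_mem_doublyStochastic {𝕜 : Type*} [RCLike 𝕜] {U : Matrix n n 𝕜}
    (hU : U ∈ unitaryGroup n 𝕜) : of (fun i j ↦ ‖U i j‖ ^ 2) ∈ doublyStochastic ℝ n := by
  refine mem_doublyStochastic_iff_sum.2
    ⟨fun i j ↦ by simp only [of_apply]; positivity, fun i ↦ ?_, fun j ↦ ?_⟩
  · have h := congr_fun₂ (mem_unitaryGroup_iff.1 hU) i i
    simp only [mul_apply, star_apply, one_apply_eq, RCLike.star_def, RCLike.mul_conj] at h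
    exact_mod_cast h
  · have h := congr_fun₂ (mem_unitaryGroup_iff'.1 hU) j j
    simp only [mul_apply, star_apply, one_apply_eq, RCLike.star_def,
      mul_comm (starRingEnd 𝕜 _), RCLike.mul_conj] at h
    exact_mod_cast h

theorem dotProduct_comp_le_dotProduct_mulVec {R : Type*} [Field R] [LinearOrder R]
    [IsStrictOrderedRing R] {f g : n → R} {σ : Perm n} (hfg : Antivary f (g ∘ σ))
    {P : Matrix n n R} (hP : P ∈ doublyStochastic R n) :
    f ⬝ᵥ (g ∘ σ) ≤ f ⬝ᵥ P *ᵥ g := by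
  have hlin : IsLinearMap R fun P : Matrix n n R ↦ f ⬝ᵥ P *ᵥ g :=
    ⟨fun P Q ↦ by simp [add_mulVec, dotProduct_add],
      fun c P ↦ by simp [smul_mulVec, dotProduct_smul]⟩
  rw [← SetLike.mem_coe, doublyStochastic_eq_convexHull_permMatrix] at hP
  refine convexHull_min ?_ (convex_halfSpace_ge hlin _) hP
  rintro _ ⟨τ, rfl⟩
  simpa [permMatrix_mulVec, dotProduct, Function.comp_def] using
    hfg.sum_mul_le_sum_mul_comp_perm (σ := σ⁻¹ * τ)

theorem sum_mul_comp_rev_le_sum_mul_mul_norm_sq {𝕜 : Type*} [RCLike 𝕜] {m : ℕ}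
    {lam mu : Fin m → ℝ} (hlam : Antitone lam) (hmu : Antitone mu)
    {U : Matrix (Fin m) (Fin m) 𝕜} (hU : U ∈ unitaryGroup (Fin m) 𝕜) :
    ∑ j, lam j * mu j.rev ≤ ∑ j, ∑ k, lam j * mu k * ‖U j k‖ ^ 2 := by
  have := dotProduct_comp_le_dotProduct_mulVec (σ := Fin.revPerm)
    (hlam.antivary (hmu.comp Fin.rev_anti)) (of_norm_sq_mem_doublyStochastic hU)
  simpa [dotProduct, mulVec, Finset.mul_sum, mul_comm, mul_left_comm, mul_assoc] using this

end Matrix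

theorem stmt_1_general (n : ℕ) (lam mu : Fin n → ℝ)
    (hlam_mono : Antitone lam)
    (hmu_mono : Antitone mu) :
    (∀ U ∈ Matrix.unitaryGroup (Fin n) ℂ,
      ∑ j : Fin n, lam j * mu (j.rev) ≤
        ∑ j : Fin n, ∑ k : Fin n, lam j * mu k * ‖U j k‖ ^ 2) ∧
    ((fun j k : Fin n => if k = j.rev then (1 : ℂ) else 0) ∈
        Matrix.unitaryGroup (Fin n) ℂ ∧
      ∑ j : Fin n, ∑ k : Fin n, lam j * mu k *
          ‖(if k = j.rev then (1 : ℂ) else 0)‖ ^ 2 =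
        ∑ j : Fin n, lam j * mu (j.rev)) ∧
    IsLeast {x : ℝ | ∃ U ∈ Matrix.unitaryGroup (Fin n) ℂ,
        x = ∑ j : Fin n, ∑ k : Fin n, lam j * mu k * ‖U j k‖ ^ 2}
      (∑ j : Fin n, lam j * mu (j.rev)) := by
  have lower (U) (hU : U ∈ unitaryGroup (Fin n) ℂ) :=
    sum_mul_comp_rev_le_sum_mul_mul_norm_sq hlam_mono hmu_mono hU
  have antiDiag_eq : (fun j k : Fin n => if k = j.rev then (1 : ℂ) else 0) =
      Fin.revPerm.permMatrix ℂ := by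
    ext j k
    simp [eq_comm]
  have antiDiag_mem := antiDiag_eq ▸ permMatrix_mem_unitaryGroup (R := ℂ) Fin.revPerm
  have antiDiag_value : ∑ j : Fin n, ∑ k : Fin n, lam j * mu k *
      ‖(if k = j.rev then (1 : ℂ) else 0)‖ ^ 2 = ∑ j : Fin n, lam j * mu (j.rev) := by
    simp [apply_ite]
  exact ⟨lower, ⟨antiDiag_mem, antiDiag_value⟩, ⟨_, antiDiag_mem, antiDiag_value.symm⟩,
    fun _ ⟨U, hU, hx⟩ ↦ hx ▸ lower U hU⟩

theorem stmt_1 (n : ℕ) (hn : 1 ≤ n) (lam mu : Fin n → ℝ)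
    (hlam_mono : Antitone lam) (hlam0 : ∀ j, 0 ≤ lam j)
    (hmu_mono : Antitone mu) (hmu0 : ∀ k, 0 ≤ mu k) :
    (∀ U ∈ Matrix.unitaryGroup (Fin n) ℂ,
      ∑ j : Fin n, lam j * mu (j.rev) ≤
        ∑ j : Fin n, ∑ k : Fin n, lam j * mu k * ‖U j k‖ ^ 2) ∧
    ((fun j k : Fin n => if k = j.rev then (1 : ℂ) else 0) ∈
        Matrix.unitaryGroup (Fin n) ℂ ∧
      ∑ j : Fin n, ∑ k : Fin n, lam j * mu k *
          ‖(if k = j.rev then (1 : ℂ) else 0)‖ ^ 2 =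
        ∑ j : Fin n, lam j * mu (j.rev)) ∧
    IsLeast {x : ℝ | ∃ U ∈ Matrix.unitaryGroup (Fin n) ℂ,
        x = ∑ j : Fin n, ∑ k : Fin n, lam j * mu k * ‖U j k‖ ^ 2}
      (∑ j : Fin n, lam j * mu (j.rev)) :=
  stmt_1_general n lam mu hlam_mono hmu_mono
end

section
/- Let $m\ge 1$, let $A$ be a Hermitian positive definite $m\times m$ complex matrix, and let $y$ be a random vector in $\mathbb C^m$ with density $\pi^{-m}e^{-\|y\|^2}$ with respect to Lebesgue measure on $\mathbb C^m$. Then for every $t>0$, $\mathbb P\big(y^*Ay\le t\big)\le \frac{C_m\,t^m}{\pi^m\,\det A}$, where $C_m$ denotes the Lebesgue volume of the unit ball $\{\xi\in\mathbb C^m:\|\xi\|\le 1\}$ (identifying $\mathbb C^m$ with $\mathbb R^{2m}$). -/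
/-!
The Gaussian density is at most `π^{-m}`, so the probability is at most `π^{-m}` times the Lebesgue
volume of the ellipsoid `{v | v^* A v ≤ t}`. Writing `A = B^* B`, this ellipsoid is the preimage
under `B` of the ball of radius `√t`, whose volume is `C_m t^m`, and the real Jacobian of `v ↦ B v`
on `ℂ^m ≅ ℝ^{2m}` is `|det B|² = det A`.
-/

open MeasureTheory Matrix
open scoped ComplexOrder

/-- The standard complex Gaussian measure on `ℂ^d`, with density `π^{-d} e^{-‖v‖²}`
with respect to Lebesgue measure. -/
noncomputable def stdGaussian (d : ℕ) : Measure (Fin d → ℂ) :=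
  (volume : Measure (Fin d → ℂ)).withDensity
    (fun v => ENNReal.ofReal (Real.exp (-∑ j, ‖v j‖ ^ 2) / Real.pi ^ d))

/-- The Lebesgue volume of the unit ball of `ℂ^m ≃ ℝ^{2m}`. -/
noncomputable def unitBallVol (m : ℕ) : ℝ :=
  ((volume : Measure (Fin m → ℂ)) {ξ | ∑ j, ‖ξ j‖ ^ 2 ≤ 1}).toReal

open scoped Pointwise

section

variable {ι : Type*} [Fintype ι]

theorem Matrix.det_restrictScalars_toLin' [DecidableEq ι] (B : Matrix ι ι ℂ) :
    LinearMap.det ((toLin' B).restrictScalars ℝ) = Complex.normSq B.det := by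
  rw [LinearMap.det_restrictScalars, LinearMap.det_toLin', Algebra.norm_complex_apply]

theorem Matrix.volume_preimage_mulVec [DecidableEq ι] {B : Matrix ι ι ℂ} (hB : B.det ≠ 0)
    (s : Set (ι → ℂ)) :
    volume ((B *ᵥ ·) ⁻¹' s) = ENNReal.ofReal (Complex.normSq B.det)⁻¹ * volume s := by
  have hdet : LinearMap.det ((toLin' B).restrictScalars ℝ) ≠ 0 := by
    rwa [det_restrictScalars_toLin', Ne, map_eq_zero]
  rw [← abs_of_nonneg (inv_nonneg.mpr (Complex.normSq_nonneg B.det)),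
    ← det_restrictScalars_toLin']
  exact Measure.addHaar_preimage_linearMap volume hdet s

theorem Matrix.normSq_det_eq_re_det_conjTranspose_mul_self [DecidableEq ι] (B : Matrix ι ι ℂ) :
    Complex.normSq B.det = (Bᴴ * B).det.re := by
  rw [det_mul, det_conjTranspose, mul_comm, Complex.star_def, Complex.mul_conj, Complex.ofReal_re]

theorem Matrix.re_star_dotProduct_conjTranspose_mul_mulVec {κ : Type*} [Fintype κ]
    (B : Matrix κ ι ℂ) (v : ι → ℂ) :
    (star v ⬝ᵥ (Bᴴ * B) *ᵥ v).re = ∑ j, ‖(B *ᵥ v) j‖ ^ 2 := by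
  rw [← mulVec_mulVec, dotProduct_mulVec, ← star_mulVec, dotProduct, Complex.re_sum]
  refine Finset.sum_congr rfl fun j _ => ?_
  rw [Pi.star_apply, Complex.star_def, ← Complex.normSq_eq_conj_mul_self]
  simp [Complex.sq_norm]

theorem volume_sum_sq_norm_le {t : ℝ} (ht : 0 < t) :
    volume {w : ι → ℂ | ∑ j, ‖w j‖ ^ 2 ≤ t}
      = ENNReal.ofReal (t ^ Fintype.card ι) * volume {w : ι → ℂ | ∑ j, ‖w j‖ ^ 2 ≤ 1} := by
  have hs : Real.sqrt t ≠ 0 := by positivity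
  have hset : {w : ι → ℂ | ∑ j, ‖w j‖ ^ 2 ≤ t}
      = Real.sqrt t • {w : ι → ℂ | ∑ j, ‖w j‖ ^ 2 ≤ 1} := by
    ext w
    rw [Set.mem_smul_set_iff_inv_smul_mem₀ hs]
    simp only [Set.mem_ofPred_eq, Pi.smul_apply, norm_smul, mul_pow, norm_inv, Real.norm_eq_abs,
      abs_of_nonneg (Real.sqrt_nonneg t), inv_pow, Real.sq_sqrt ht.le, ← Finset.mul_sum,
      inv_mul_le_iff₀ ht, mul_one]
  rw [hset, Measure.addHaar_smul_of_nonneg _ (Real.sqrt_nonneg t), Module.finrank_pi_fintype]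
  simp [Complex.finrank_real_complex, mul_comm _ 2, pow_mul, Real.sq_sqrt ht.le]

theorem volume_sum_sq_norm_le_one_lt_top : volume {w : ι → ℂ | ∑ j, ‖w j‖ ^ 2 ≤ 1} < ⊤ := by
  refine (Metric.isBounded_closedBall (x := (0 : ι → ℂ)) (r := 1)).subset
    (fun w hw => ?_) |>.measure_lt_top
  rw [Metric.mem_closedBall, dist_zero_right, pi_norm_le_iff_of_nonneg zero_le_one]
  intro i
  have : ‖w i‖ ^ 2 ≤ 1 :=
    (Finset.single_le_sum (f := fun j => ‖w j‖ ^ 2) (fun j _ => by positivity)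
      (Finset.mem_univ i)).trans hw
  exact (pow_le_one_iff_of_nonneg (norm_nonneg _) two_ne_zero).mp this

open scoped MatrixOrder in
theorem Matrix.PosSemidef.exists_eq_conjTranspose_mul_self [DecidableEq ι] {A : Matrix ι ι ℂ}
    (hA : A.PosSemidef) : ∃ B : Matrix ι ι ℂ, A = Bᴴ * B :=
  ⟨CFC.sqrt A, by rw [(CFC.sqrt_nonneg A).posSemidef.1.eq, CFC.sqrt_mul_sqrt_self A hA.nonneg]⟩

theorem Matrix.PosDef.volume_re_dotProduct_mulVec_le [DecidableEq ι] {A : Matrix ι ι ℂ}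
    (hA : A.PosDef) {t : ℝ} (ht : 0 < t) :
    volume {v : ι → ℂ | (star v ⬝ᵥ A *ᵥ v).re ≤ t} = ENNReal.ofReal (A.det.re)⁻¹ *
      (ENNReal.ofReal (t ^ Fintype.card ι) * volume {w : ι → ℂ | ∑ j, ‖w j‖ ^ 2 ≤ 1}) := by
  obtain ⟨B, rfl⟩ := hA.posSemidef.exists_eq_conjTranspose_mul_self
  have hB : B.det ≠ 0 := by
    rw [← Complex.normSq_pos, normSq_det_eq_re_det_conjTranspose_mul_self]
    exact (Complex.pos_iff.mp hA.det_pos).1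
  have hset : {v : ι → ℂ | (star v ⬝ᵥ (Bᴴ * B) *ᵥ v).re ≤ t}
      = (B *ᵥ ·) ⁻¹' {w | ∑ j, ‖w j‖ ^ 2 ≤ t} := by
    ext v
    simp only [Set.mem_ofPred_eq, Set.mem_preimage, re_star_dotProduct_conjTranspose_mul_mulVec]
  rw [hset, volume_preimage_mulVec hB, normSq_det_eq_re_det_conjTranspose_mul_self,
    volume_sum_sq_norm_le ht]

end

theorem stdGaussian_le_volume (d : ℕ) (s : Set (Fin d → ℂ)) :
    stdGaussian d s ≤ ENNReal.ofReal (Real.pi ^ d)⁻¹ * volume s := by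
  rw [stdGaussian, withDensity_apply' _ s, ← setLIntegral_const]
  refine lintegral_mono fun v => ENNReal.ofReal_le_ofReal ?_
  rw [div_eq_mul_inv]
  exact mul_le_of_le_one_left (by positivity)
    (Real.exp_le_one_iff.mpr (neg_nonpos.mpr (by positivity)))

theorem stmt_7_general (m : ℕ) (A : Matrix (Fin m) (Fin m) ℂ) (hA : A.PosDef)
    (t : ℝ) (ht : 0 < t) :
    (stdGaussian m {v | (star v ⬝ᵥ A.mulVec v).re ≤ t}).toReal ≤
      unitBallVol m * t ^ m / (Real.pi ^ m * A.det.re) := by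
  have hdet : 0 < A.det.re := (Complex.pos_iff.mp hA.det_pos).1
  have hvol := Matrix.PosDef.volume_re_dotProduct_mulVec_le hA ht
  rw [Fintype.card_fin] at hvol
  have hfin : ENNReal.ofReal (Real.pi ^ m)⁻¹ * volume {v | (star v ⬝ᵥ A *ᵥ v).re ≤ t} ≠ ⊤ := by
    rw [hvol]
    exact ENNReal.mul_ne_top ENNReal.ofReal_ne_top (ENNReal.mul_ne_top ENNReal.ofReal_ne_top
      (ENNReal.mul_ne_top ENNReal.ofReal_ne_top volume_sum_sq_norm_le_one_lt_top.ne))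
  calc (stdGaussian m {v | (star v ⬝ᵥ A.mulVec v).re ≤ t}).toReal
      ≤ (ENNReal.ofReal (Real.pi ^ m)⁻¹ * volume {v | (star v ⬝ᵥ A *ᵥ v).re ≤ t}).toReal :=
        ENNReal.toReal_mono hfin (stdGaussian_le_volume m _)
    _ = unitBallVol m * t ^ m / (Real.pi ^ m * A.det.re) := by
        rw [hvol, ENNReal.toReal_mul, ENNReal.toReal_mul, ENNReal.toReal_mul,
          ENNReal.toReal_ofReal (by positivity), ENNReal.toReal_ofReal (by positivity),
          ENNReal.toReal_ofReal (by positivity), unitBallVol]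
        field_simp

theorem stmt_7 (m : ℕ) (hm : 1 ≤ m) (A : Matrix (Fin m) (Fin m) ℂ) (hA : A.PosDef)
    (t : ℝ) (ht : 0 < t) :
    (stdGaussian m {v | (star v ⬝ᵥ A.mulVec v).re ≤ t}).toReal ≤
      unitBallVol m * t ^ m / (Real.pi ^ m * A.det.re) :=
  stmt_7_general m A hA t ht
end

section
/- Let $n\ge 2$ and $1\le J\le n-1$, and let $w_1,\ldots,w_n$ be i.i.d. standard complex Gaussian random variables. Then there exist constants $C_2>C_1>0$, depending only on $n$ and $J$, such that for all $s_1,\ldots,s_J\in(0,1/2]$, $C_1\prod_{j=1}^J s_j \;\le\; \mathbb P\Big(\sum_{j=1}^{J}\frac{1-s_j}{s_j}\,|w_j|^2 \le \sum_{j=J+1}^{n}|w_j|^2\Big) \;\le\; C_2\prod_{j=1}^J s_j$. -/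
open MeasureTheory

/-- The standard complex Gaussian measure on `ℂ`, with density `e^{-|z|²}/π`
with respect to Lebesgue measure. -/
noncomputable def stdComplexGaussian : Measure ℂ :=
  (volume : Measure ℂ).withDensity
    (fun z => ENNReal.ofReal (Real.exp (-‖z‖ ^ 2) / Real.pi))

open ProbabilityTheory

/-!
Let `T` be the set of indices `≥ J` and `S = ∑_{i ∈ T} |w_i|²`. As
`1/(2 s_j) ≤ (1 - s_j)/s_j ≤ 1/s_j`, the event confines each `|w_j|²` with `j < J` to a disc
`{|z|² ≤ t_j}` with `t_j` of order `s_j S`, and such a disc has Gaussian probability between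
`e^{-t} t` and `t`, because the density lies between `e^{-t}/π` and `1/π` on it.

Lower bound: the event contains `{|w_j|² ≤ s_j/(2J) for all j < J} ∩ {|w_J|² > 1/2}`, whose
probability factors by independence into `(1/2) ∏ (e^{-1} s_j/(2J))`.

Upper bound: take `i ∈ T` maximising `|w_i|²` and `k = ⌊|w_i|²⌋`. Then `|w_i|² ≥ k` and
`|w_j|² ≤ 2|T|(k+1) s_j` for all `j < J`, so independence and the Chernoff bound
`P(|w|² ≥ k) ≤ 2 e^{-k/2}` bound the probability by `∑_{i, k} 2 e^{-k/2} (2|T|(k+1))^J ∏ s_j`,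
a convergent series times `∏ s_j`.
-/

lemma Complex.lintegral_exp_neg_mul_sq_norm_div_pi {b : ℝ} (hb : 0 < b) :
    ∫⁻ z : ℂ, ENNReal.ofReal (Real.exp (-b * ‖z‖ ^ 2) / Real.pi) = ENNReal.ofReal b⁻¹ := by
  have hint : ∫ z : ℂ, Real.exp (-b * ‖z‖ ^ 2) / Real.pi = b⁻¹ := by
    rw [integral_div, GaussianFourier.integral_rexp_neg_mul_sq_norm hb,
      Complex.finrank_real_complex]
    norm_num
    field_simp
  rw [← hint, ofReal_integral_eq_lintegral_ofReal
    (.of_integral_ne_zero (by rw [hint]; positivity)) (.of_forall fun _ => by positivity)]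

lemma stdComplexGaussian_apply {S : Set ℂ} (hS : MeasurableSet S) :
    stdComplexGaussian S = ∫⁻ z in S, ENNReal.ofReal (Real.exp (-‖z‖ ^ 2) / Real.pi) :=
  withDensity_apply _ hS

instance : IsProbabilityMeasure stdComplexGaussian where
  measure_univ := by
    simpa [stdComplexGaussian_apply] using Complex.lintegral_exp_neg_mul_sq_norm_div_pi one_pos

lemma Complex.volume_setOf_sq_norm_le {t : ℝ} (ht : 0 ≤ t) :
    volume {z : ℂ | ‖z‖ ^ 2 ≤ t} = ENNReal.ofReal (t * Real.pi) := by
  have : {z : ℂ | ‖z‖ ^ 2 ≤ t} = Metric.closedBall 0 (Real.sqrt t) := by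
    ext z
    simp [Real.le_sqrt (norm_nonneg z) ht]
  rw [this, Complex.volume_closedBall, ← ENNReal.ofReal_pow (Real.sqrt_nonneg t),
    Real.sq_sqrt ht, ENNReal.ofReal_mul ht, ← NNReal.coe_real_pi, ENNReal.ofReal_coe_nnreal]

lemma measurableSet_setOf_sq_norm_le (t : ℝ) : MeasurableSet {z : ℂ | ‖z‖ ^ 2 ≤ t} :=
  measurableSet_le (by fun_prop) measurable_const

lemma stdComplexGaussian_setOf_sq_norm_le_le {t : ℝ} (ht : 0 ≤ t) :
    stdComplexGaussian {z : ℂ | ‖z‖ ^ 2 ≤ t} ≤ ENNReal.ofReal t := by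
  rw [stdComplexGaussian_apply (measurableSet_setOf_sq_norm_le t)]
  calc ∫⁻ z in {z : ℂ | ‖z‖ ^ 2 ≤ t}, ENNReal.ofReal (Real.exp (-‖z‖ ^ 2) / Real.pi)
      ≤ ∫⁻ _ in {z : ℂ | ‖z‖ ^ 2 ≤ t}, ENNReal.ofReal Real.pi⁻¹ := by
        gcongr with z
        rw [div_eq_mul_inv]
        exact mul_le_of_le_one_left (by positivity)
          (Real.exp_le_one_iff.2 (neg_nonpos.2 (sq_nonneg _)))
    _ = ENNReal.ofReal t := by
        rw [setLIntegral_const, Complex.volume_setOf_sq_norm_le ht,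
          ← ENNReal.ofReal_mul (by positivity)]
        field_simp

lemma ofReal_exp_neg_mul_le_stdComplexGaussian_setOf_sq_norm_le {t : ℝ} (ht : 0 ≤ t) :
    ENNReal.ofReal (Real.exp (-t) * t) ≤ stdComplexGaussian {z : ℂ | ‖z‖ ^ 2 ≤ t} := by
  rw [stdComplexGaussian_apply (measurableSet_setOf_sq_norm_le t)]
  calc ENNReal.ofReal (Real.exp (-t) * t)
      = ∫⁻ _ in {z : ℂ | ‖z‖ ^ 2 ≤ t}, ENNReal.ofReal (Real.exp (-t) / Real.pi) := by
        rw [setLIntegral_const, Complex.volume_setOf_sq_norm_le ht,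
          ← ENNReal.ofReal_mul (by positivity)]
        field_simp
    _ ≤ ∫⁻ z in {z : ℂ | ‖z‖ ^ 2 ≤ t}, ENNReal.ofReal (Real.exp (-‖z‖ ^ 2) / Real.pi) :=
        setLIntegral_mono' (measurableSet_setOf_sq_norm_le t) fun z (hz : ‖z‖ ^ 2 ≤ t) => by
          gcongr

lemma one_sub_ofReal_le_stdComplexGaussian_setOf_lt_sq_norm {t : ℝ} (ht : 0 ≤ t) :
    1 - ENNReal.ofReal t ≤ stdComplexGaussian {z : ℂ | t < ‖z‖ ^ 2} := by
  have hcompl : {z : ℂ | t < ‖z‖ ^ 2} = {z : ℂ | ‖z‖ ^ 2 ≤ t}ᶜ := by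
    ext z
    simp
  rw [hcompl, prob_compl_eq_one_sub (measurableSet_setOf_sq_norm_le t)]
  exact tsub_le_tsub_left (stdComplexGaussian_setOf_sq_norm_le_le ht) _

lemma stdComplexGaussian_setOf_le_sq_norm_le (t : ℝ) :
    stdComplexGaussian {z : ℂ | t ≤ ‖z‖ ^ 2} ≤ ENNReal.ofReal (2 * Real.exp (-t / 2)) := by
  rw [stdComplexGaussian_apply (measurableSet_le measurable_const (by fun_prop))]
  calc ∫⁻ z in {z : ℂ | t ≤ ‖z‖ ^ 2}, ENNReal.ofReal (Real.exp (-‖z‖ ^ 2) / Real.pi)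
      ≤ ∫⁻ z : ℂ, ENNReal.ofReal (Real.exp (-t / 2)) *
          ENNReal.ofReal (Real.exp (-(1 / 2) * ‖z‖ ^ 2) / Real.pi) := by
        refine (setLIntegral_mono' (measurableSet_le measurable_const (by fun_prop))
          fun z (hz : t ≤ ‖z‖ ^ 2) => ?_).trans (setLIntegral_le_lintegral _ _)
        rw [← ENNReal.ofReal_mul (by positivity), ← mul_div_assoc, ← Real.exp_add]
        gcongr
        linarith
    _ = ENNReal.ofReal (2 * Real.exp (-t / 2)) := by
        rw [lintegral_const_mul _ (by fun_prop),
          Complex.lintegral_exp_neg_mul_sq_norm_div_pi (by norm_num),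
          ← ENNReal.ofReal_mul (by positivity)]
        norm_num [mul_comm]

lemma summable_exp_neg_half_mul_pow (c : ℝ) (m : ℕ) :
    Summable fun k : ℕ => 2 * Real.exp (-k / 2) * (c * (k + 1)) ^ m := by
  have h := (summable_nat_add_iff 1).2 (Real.summable_pow_mul_exp_neg_nat_mul m one_half_pos)
  refine (h.mul_left (2 * c ^ m * Real.exp (1 / 2))).congr fun k => ?_
  push_cast
  rw [mul_pow, show -(k : ℝ) / 2 = 1 / 2 + -(1 / 2) * (k + 1) by ring, Real.exp_add]
  ring

lemma Finset.exists_sum_le_card_mul {ι : Type*} {T : Finset ι} (hT : T.Nonempty) (f : ι → ℝ) :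
    ∃ i ∈ T, ∑ j ∈ T, f j ≤ T.card * f i := by
  obtain ⟨i, hi, hmax⟩ := T.exists_max_image f hT
  exact ⟨i, hi, by simpa using T.sum_le_card_nsmul f (f i) hmax⟩

lemma Function.Injective.optionElim {ι κ : Type*} {e : κ → ι} {i : ι}
    (he : Function.Injective e) (hi : i ∉ Set.range e) :
    Function.Injective fun o : Option κ => o.elim i e := by
  rintro (_ | a) (_ | b) h
  · rfl
  · exact absurd ⟨b, h.symm⟩ hi
  · exact absurd ⟨a, h⟩ hi
  · exact congrArg some (he h)

lemma ProbabilityTheory.iIndepFun.measure_iInter_preimage_optionElim {Ω ι κ β : Type*}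
    [MeasurableSpace Ω] [MeasurableSpace β] [Fintype κ] {μ : Measure Ω} {ν : Measure β}
    {X : ι → Ω → β} {e : κ → ι} {i : ι}
    (hX : ∀ i, Measurable (X i)) (hind : iIndepFun X μ) (hlaw : ∀ i, μ.map (X i) = ν)
    (he : Function.Injective e) (hi : i ∉ Set.range e) {B : Option κ → Set β}
    (hB : ∀ o, MeasurableSet (B o)) :
    μ (⋂ o, X (o.elim i e) ⁻¹' B o) = ν (B none) * ∏ j, ν (B (some j)) := by
  rw [(hind.precomp (he.optionElim hi)).meas_iInter fun o => ⟨B o, hB o, rfl⟩,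
    Fintype.prod_option]
  simp only [← Measure.map_apply (hX _) (hB _), hlaw]

section ComparisonEvent

variable {Ω ι κ : Type*} [Fintype κ]
  {w : ι → Ω → ℂ} {e : κ → ι} {T : Finset ι} {s : κ → ℝ}

def comparisonEvent (w : ι → Ω → ℂ) (e : κ → ι) (T : Finset ι) (s : κ → ℝ) : Set Ω :=
  {ω | ∑ j, (1 - s j) / s j * ‖w (e j) ω‖ ^ 2 ≤ ∑ i ∈ T, ‖w i ω‖ ^ 2}

lemma sq_norm_le_of_mem_comparisonEvent (hs : ∀ j, s j ∈ Set.Ioc 0 (1 / 2)) {ω : Ω}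
    (hω : ω ∈ comparisonEvent w e T s) (j : κ) :
    ‖w (e j) ω‖ ^ 2 ≤ 2 * s j * ∑ i ∈ T, ‖w i ω‖ ^ 2 := by
  have hterm : ∀ j, 0 ≤ (1 - s j) / s j * ‖w (e j) ω‖ ^ 2 := fun j =>
    mul_nonneg (div_nonneg (by linarith [(hs j).2]) (hs j).1.le) (sq_nonneg _)
  have hsingle := Finset.single_le_sum (fun j _ => hterm j) (Finset.mem_univ j)
  obtain ⟨hs0, hs1⟩ := hs j
  calc ‖w (e j) ω‖ ^ 2 ≤ 2 * s j * ((1 - s j) / s j * ‖w (e j) ω‖ ^ 2) := by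
        rw [← mul_assoc, mul_assoc 2, mul_div_cancel₀ _ hs0.ne']
        exact le_mul_of_one_le_left (sq_nonneg _) (by linarith)
    _ ≤ 2 * s j * ∑ i ∈ T, ‖w i ω‖ ^ 2 := by
        gcongr
        exact hsingle.trans hω

lemma iInter_preimage_subset_comparisonEvent {i : ι} (hi : i ∈ T)
    (hs : ∀ j, s j ∈ Set.Ioc 0 1) :
    ⋂ o : Option κ, w (o.elim i e) ⁻¹'
        o.elim {z | 1 / 2 < ‖z‖ ^ 2} (fun j => {z | ‖z‖ ^ 2 ≤ s j / (2 * Fintype.card κ)}) ⊆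
      comparisonEvent w e T s := by
  intro ω hω
  simp only [Set.mem_iInter, Set.mem_preimage] at hω
  have hball (j : κ) : (1 - s j) / s j * ‖w (e j) ω‖ ^ 2 ≤ 1 / (2 * Fintype.card κ) := by
    obtain ⟨hs0, hs1⟩ := hs j
    calc (1 - s j) / s j * ‖w (e j) ω‖ ^ 2
        ≤ (1 - s j) / s j * (s j / (2 * Fintype.card κ)) := by
          exact mul_le_mul_of_nonneg_left (hω (some j)) (div_nonneg (by linarith) hs0.le)
      _ ≤ 1 / (2 * Fintype.card κ) := by
          rw [div_mul_div_comm, mul_comm (1 - s j), mul_div_mul_left _ _ hs0.ne']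
          gcongr
          linarith
  calc ∑ j, (1 - s j) / s j * ‖w (e j) ω‖ ^ 2
      ≤ ∑ _j : κ, 1 / (2 * (Fintype.card κ : ℝ)) := Finset.sum_le_sum fun j _ => hball j
    _ ≤ ‖w i ω‖ ^ 2 := by
        rw [Finset.sum_const, Finset.card_univ, nsmul_eq_mul]
        refine le_trans ?_ (hω none).le
        rw [show (Fintype.card κ : ℝ) * (1 / (2 * Fintype.card κ)) =
          Fintype.card κ / Fintype.card κ / 2 by ring]
        exact div_le_div_of_nonneg_right (div_self_le_one _) two_pos.le
    _ ≤ ∑ i ∈ T, ‖w i ω‖ ^ 2 :=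
        Finset.single_le_sum (f := fun i => ‖w i ω‖ ^ 2) (fun _ _ => sq_nonneg _) hi

lemma comparisonEvent_subset_iUnion_iInter_preimage (hT : T.Nonempty)
    (hs : ∀ j, s j ∈ Set.Ioc 0 (1 / 2)) :
    comparisonEvent w e T s ⊆ ⋃ i ∈ T, ⋃ k : ℕ, ⋂ o : Option κ, w (o.elim i e) ⁻¹'
      o.elim {z | (k : ℝ) ≤ ‖z‖ ^ 2} (fun j => {z | ‖z‖ ^ 2 ≤ 2 * T.card * (k + 1) * s j}) := by
  intro ω hω
  obtain ⟨i, hi, hmax⟩ := T.exists_sum_le_card_mul hT fun i => ‖w i ω‖ ^ 2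
  refine Set.mem_biUnion hi (Set.mem_iUnion.2 ⟨⌊‖w i ω‖ ^ 2⌋₊, Set.mem_iInter.2 ?_⟩)
  rintro (_ | j)
  · exact Nat.floor_le (sq_nonneg ‖w i ω‖)
  · have hfloor : ‖w i ω‖ ^ 2 ≤ ⌊‖w i ω‖ ^ 2⌋₊ + 1 := (Nat.lt_floor_add_one _).le
    calc ‖w (e j) ω‖ ^ 2 ≤ 2 * s j * ∑ i ∈ T, ‖w i ω‖ ^ 2 :=
          sq_norm_le_of_mem_comparisonEvent hs hω j
      _ ≤ 2 * s j * (T.card * (⌊‖w i ω‖ ^ 2⌋₊ + 1)) := by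
          have := (hs j).1
          gcongr
          exact hmax.trans (mul_le_mul_of_nonneg_left hfloor (Nat.cast_nonneg _))
      _ = 2 * T.card * (⌊‖w i ω‖ ^ 2⌋₊ + 1) * s j := by ring

variable [MeasurableSpace Ω] {μ : Measure Ω}

theorem ofReal_mul_prod_le_measure_comparisonEvent (hw : ∀ i, Measurable (w i))
    (hind : iIndepFun w μ) (hlaw : ∀ i, μ.map (w i) = stdComplexGaussian)
    (he : Function.Injective e) {i : ι} (hiT : i ∈ T) (hie : i ∉ Set.range e)
    (hs : ∀ j, s j ∈ Set.Ioc 0 1) :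
    ENNReal.ofReal ((Real.exp (-1) / (2 * Fintype.card κ)) ^ Fintype.card κ / 2 * ∏ j, s j) ≤
      μ (comparisonEvent w e T s) := by
  set m : ℝ := (Fintype.card κ : ℝ)
  refine le_trans ?_ (measure_mono (iInter_preimage_subset_comparisonEvent hiT hs))
  rw [hind.measure_iInter_preimage_optionElim hw hlaw he hie fun o => ?meas]
  case meas =>
    cases o
    · exact measurableSet_lt measurable_const (by fun_prop)
    · exact measurableSet_setOf_sq_norm_le _
  have htail : ENNReal.ofReal (1 / 2) ≤ stdComplexGaussian {z | 1 / 2 < ‖z‖ ^ 2} := by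
    refine le_trans (le_of_eq ?_) (one_sub_ofReal_le_stdComplexGaussian_setOf_lt_sq_norm
      (by norm_num))
    rw [← ENNReal.ofReal_one, ← ENNReal.ofReal_sub _ (by norm_num)]
    norm_num
  have hball (j : κ) : ENNReal.ofReal (Real.exp (-1) / (2 * m) * s j) ≤
      stdComplexGaussian {z | ‖z‖ ^ 2 ≤ s j / (2 * m)} := by
    obtain ⟨hs0, hs1⟩ := hs j
    have hm : (1 : ℝ) ≤ m := Nat.one_le_cast.2 (Fintype.card_pos_iff.2 ⟨j⟩)
    have ht : s j / (2 * m) ≤ 1 := by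
      rw [div_le_one (by positivity)]
      linarith
    refine le_trans (ENNReal.ofReal_le_ofReal ?_)
      (ofReal_exp_neg_mul_le_stdComplexGaussian_setOf_sq_norm_le (by positivity))
    rw [div_mul_eq_mul_div, mul_div_assoc]
    gcongr
  calc ENNReal.ofReal ((Real.exp (-1) / (2 * m)) ^ Fintype.card κ / 2 * ∏ j, s j)
      = ENNReal.ofReal (1 / 2) * ∏ j, ENNReal.ofReal (Real.exp (-1) / (2 * m) * s j) := by
        rw [← ENNReal.ofReal_prod_of_nonneg fun j _ => by have := (hs j).1; positivity,
          ← ENNReal.ofReal_mul (by norm_num), Finset.prod_mul_distrib, Finset.prod_const,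
          Finset.card_univ]
        congr 1
        ring
    _ ≤ _ := mul_le_mul' htail (Finset.prod_le_prod' fun j _ => hball j)

theorem measure_comparisonEvent_le (hw : ∀ i, Measurable (w i))
    (hind : iIndepFun w μ) (hlaw : ∀ i, μ.map (w i) = stdComplexGaussian)
    (he : Function.Injective e) (hT : T.Nonempty) (hTe : ∀ i ∈ T, i ∉ Set.range e)
    (hs : ∀ j, s j ∈ Set.Ioc 0 (1 / 2)) :
    μ (comparisonEvent w e T s) ≤ ENNReal.ofReal (T.card *
      (∑' k : ℕ, 2 * Real.exp (-k / 2) * (2 * T.card * (k + 1)) ^ Fintype.card κ) *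
        ∏ j, s j) := by
  set c : ℝ := 2 * T.card
  set g : ℕ → ℝ := fun k => 2 * Real.exp (-k / 2) * (c * (k + 1)) ^ Fintype.card κ
  have hP : 0 ≤ ∏ j, s j := Finset.prod_nonneg fun j _ => (hs j).1.le
  set A : ι → ℕ → Set Ω := fun i k => ⋂ o : Option κ, w (o.elim i e) ⁻¹'
    o.elim {z | (k : ℝ) ≤ ‖z‖ ^ 2} (fun j => {z | ‖z‖ ^ 2 ≤ c * (k + 1) * s j})
  have hpiece (i : ι) (hi : i ∈ T) (k : ℕ) : μ (A i k) ≤ ENNReal.ofReal (g k * ∏ j, s j) := by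
    rw [hind.measure_iInter_preimage_optionElim hw hlaw he (hTe i hi) fun o => ?meas]
    case meas =>
      cases o
      · exact measurableSet_le measurable_const (by fun_prop)
      · exact measurableSet_setOf_sq_norm_le _
    have hball (j : κ) : stdComplexGaussian {z | ‖z‖ ^ 2 ≤ c * (k + 1) * s j} ≤
        ENNReal.ofReal (c * (k + 1) * s j) :=
      stdComplexGaussian_setOf_sq_norm_le_le (by have := (hs j).1; positivity)
    calc _ ≤ ENNReal.ofReal (2 * Real.exp (-k / 2)) * ∏ j, ENNReal.ofReal (c * (k + 1) * s j) :=
          mul_le_mul' (stdComplexGaussian_setOf_le_sq_norm_le k)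
            (Finset.prod_le_prod' fun j _ => hball j)
      _ = ENNReal.ofReal (g k * ∏ j, s j) := by
        rw [← ENNReal.ofReal_prod_of_nonneg fun j _ => by have := (hs j).1; positivity,
          ← ENNReal.ofReal_mul (by positivity), Finset.prod_mul_distrib, Finset.prod_const,
          Finset.card_univ]
        congr 1
        ring
  calc μ (comparisonEvent w e T s)
      ≤ ∑ i ∈ T, ∑' k : ℕ, μ (A i k) :=
        (measure_mono (comparisonEvent_subset_iUnion_iInter_preimage hT hs)).trans
          ((measure_biUnion_finset_le _ _).trans
            (Finset.sum_le_sum fun i _ => measure_iUnion_le _))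
    _ ≤ ∑ _i ∈ T, ∑' k : ℕ, ENNReal.ofReal (g k * ∏ j, s j) :=
        Finset.sum_le_sum fun i hi => ENNReal.tsum_le_tsum (hpiece i hi)
    _ = ENNReal.ofReal (T.card * (∑' k, g k) * ∏ j, s j) := by
        rw [← ENNReal.ofReal_tsum_of_nonneg (fun k => by positivity)
            ((summable_exp_neg_half_mul_pow c _).mul_right _),
          Finset.sum_const, nsmul_eq_mul, ← ENNReal.ofReal_natCast,
          ← ENNReal.ofReal_mul (by positivity), tsum_mul_right, mul_assoc]

end ComparisonEvent

theorem stmt_9 (n J : ℕ) (hJ1 : 1 ≤ J) (hJn : J ≤ n - 1)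
    {Ω : Type*} [MeasurableSpace Ω] (μ : Measure Ω) [IsProbabilityMeasure μ]
    (w : Fin n → Ω → ℂ) (hwmeas : ∀ j, Measurable (w j))
    (hiid : ProbabilityTheory.iIndepFun w μ)
    (hlaw : ∀ j, μ.map (w j) = stdComplexGaussian) :
    ∃ C1 C2 : ℝ, 0 < C1 ∧ C1 < C2 ∧
      ∀ s : Fin J → ℝ, (∀ j, s j ∈ Set.Ioc (0 : ℝ) (1 / 2)) →
        C1 * ∏ j, s j ≤
            (μ {ω | ∑ j : Fin J, ((1 - s j) / s j) *
                ‖w (Fin.castLE (by omega : J ≤ n) j) ω‖ ^ 2 ≤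
              ∑ j ∈ Finset.univ.filter (fun j : Fin n => J ≤ (j : ℕ)),
                ‖w j ω‖ ^ 2}).toReal ∧
          (μ {ω | ∑ j : Fin J, ((1 - s j) / s j) *
                ‖w (Fin.castLE (by omega : J ≤ n) j) ω‖ ^ 2 ≤
              ∑ j ∈ Finset.univ.filter (fun j : Fin n => J ≤ (j : ℕ)),
                ‖w j ω‖ ^ 2}).toReal ≤ C2 * ∏ j, s j := by
  have hJ : J < n := by omega
  set T := Finset.univ.filter fun j : Fin n => J ≤ (j : ℕ)
  have hJT : ⟨J, hJ⟩ ∈ T := by simp [T]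
  have hTe : ∀ i ∈ T, i ∉ Set.range (Fin.castLE hJ.le) := by
    rintro i hi ⟨j, rfl⟩
    simp [T] at hi
    omega
  have hJpos : (0 : ℝ) < Fintype.card (Fin J) := by simp; omega
  set C1 := (Real.exp (-1) / (2 * Fintype.card (Fin J))) ^ Fintype.card (Fin J) / 2
  set C := T.card *
    ∑' k : ℕ, 2 * Real.exp (-k / 2) * (2 * T.card * (k + 1)) ^ Fintype.card (Fin J)
  have hC1 : 0 < C1 := by positivity
  refine ⟨C1, max C (2 * C1), hC1, lt_max_of_lt_right (by linarith), fun s hs => ⟨?_, ?_⟩⟩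
  · exact (ENNReal.ofReal_le_iff_le_toReal (measure_ne_top _ _)).1
      (ofReal_mul_prod_le_measure_comparisonEvent hwmeas hiid hlaw (Fin.castLE_injective _) hJT
        (hTe _ hJT) fun j => ⟨(hs j).1, (hs j).2.trans (by norm_num)⟩)
  · have hP : 0 ≤ ∏ j, s j := Finset.prod_nonneg fun j _ => (hs j).1.le
    have hC : C * ∏ j, s j ≤ max C (2 * C1) * ∏ j, s j := by gcongr; exact le_max_left _ _
    refine ENNReal.toReal_le_of_le_ofReal (mul_nonneg (le_max_of_le_right (by positivity)) hP)
      ((measure_comparisonEvent_le hwmeas hiid hlaw (Fin.castLE_injective _) ⟨_, hJT⟩ hTe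
        hs).trans (ENNReal.ofReal_le_ofReal hC))
end

section
/- Fix integers $n,m\ge 1$ and a real number $r\ge 0$. For $t\in[0,1]$, let $d_D(r,t)$ denote the infimum of $F(\alpha,\beta)=\sum_{j=1}^{n}(2n-2j+1)\alpha_j+\sum_{k=1}^{n\wedge m}(n+m-2k+1)\beta_k - m\sum_{j=1}^{n}(1-\alpha_j)^+ + \sum_{j=1}^{n}\sum_{k=1}^{n\wedge m}(1-\alpha_j-\beta_k)^+$ over all $0\le\alpha_1\le\ldots\le\alpha_{n}$ and $0\le\beta_1\le\ldots\le\beta_{n\wedge m}$ satisfying $\sum_{j=1}^{n}(1-\alpha_j)^+ + (1-t)\sum_{k=1}^{n\wedge m}(1-\beta_k)^+\le r$ and $\alpha_j+\beta_k\ge 1$ whenever $j+k=n+1$; and let $d_S(r,t)$ denote the same infimum except with the rate constraint $\sum_{j=1}^{n}(1-\alpha_j)^+ + t\sum_{k=1}^{n\wedge m}(1-\beta_k)^+\le r$. Then: (i) $d_S(r,t)=d_D(r,1-t)$ for all $t\in[0,1]$; (ii) $t\mapsto d_D(r,t)$ is nonincreasing on $[0,1]$; and consequently (iii) $\max_{t\in[0,1]}\min\{d_S(r,t),d_D(r,t)\}=d_D(r,1/2)$.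 -/
/-- The objective function of the diversity optimization problem (case `p = n`). -/
noncomputable def Fobj (n m : ℕ) (α : Fin n → ℝ) (β : Fin (min n m) → ℝ) : ℝ :=
  (∑ j : Fin n, (2 * (n : ℝ) - 2 * ((j : ℕ) + 1) + 1) * α j) +
    (∑ k : Fin (min n m), ((n : ℝ) + m - 2 * ((k : ℕ) + 1) + 1) * β k) -
    m * (∑ j : Fin n, max (1 - α j) 0) +
    ∑ j : Fin n, ∑ k : Fin (min n m), max (1 - α j - β k) 0

/-- The feasible set of the diversity optimization problem, with weight `c` on the
relay-link rate term and target rate `r`. -/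
def Feasible (n m : ℕ) (c r : ℝ) (α : Fin n → ℝ) (β : Fin (min n m) → ℝ) : Prop :=
  (∀ j, 0 ≤ α j) ∧ Monotone α ∧ (∀ k, 0 ≤ β k) ∧ Monotone β ∧
    (∑ j : Fin n, max (1 - α j) 0) + c * (∑ k : Fin (min n m), max (1 - β k) 0) ≤ r ∧
    (∀ (j : Fin n) (k : Fin (min n m)), (j : ℕ) + (k : ℕ) + 1 = n → 1 ≤ α j + β k)

/-- The destination cut diversity order: weight `1 - t` on the relay term. -/
noncomputable def dDest (n m : ℕ) (r t : ℝ) : ℝ :=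
  sInf {x : ℝ | ∃ (α : Fin n → ℝ) (β : Fin (min n m) → ℝ),
    Feasible n m (1 - t) r α β ∧ x = Fobj n m α β}

/-- The source cut diversity order: weight `t` on the relay term. -/
noncomputable def dSrc (n m : ℕ) (r t : ℝ) : ℝ :=
  sInf {x : ℝ | ∃ (α : Fin n → ℝ) (β : Fin (min n m) → ℝ),
    Feasible n m t r α β ∧ x = Fobj n m α β}


lemma src_eq_dest (n m : ℕ) (r t : ℝ) : dSrc n m r t = dDest n m r (1 - t) := by
  unfold dSrc dDest
  rw [show (1:ℝ) - (1 - t) = t from by ring]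

lemma sum_max_nonneg {ι : Type*} [Fintype ι] (f : ι → ℝ) :
    0 ≤ ∑ i, max (f i) 0 :=
  Finset.sum_nonneg fun i _ => le_max_right _ _

lemma Fobj_lb (n m : ℕ) (α : Fin n → ℝ) (β : Fin (min n m) → ℝ)
    (hα : ∀ j, 0 ≤ α j) (hβ : ∀ k, 0 ≤ β k) : -((m : ℝ) * n) ≤ Fobj n m α β := by
  unfold Fobj
  have h1 : 0 ≤ ∑ j : Fin n, (2 * (n : ℝ) - 2 * ((j : ℕ) + 1) + 1) * α j := by
    refine Finset.sum_nonneg fun j _ => mul_nonneg ?_ (hα j)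
    have : ((j : ℕ) : ℝ) + 1 ≤ n := by exact_mod_cast j.isLt
    linarith
  have h2 : 0 ≤ ∑ k : Fin (min n m), ((n : ℝ) + m - 2 * ((k : ℕ) + 1) + 1) * β k := by
    refine Finset.sum_nonneg fun k _ => mul_nonneg ?_ (hβ k)
    have hk : (k : ℕ) + 1 ≤ min n m := k.isLt
    have hkn : ((k : ℕ) : ℝ) + 1 ≤ n := by
      exact_mod_cast hk.trans (min_le_left n m)
    have hkm : ((k : ℕ) : ℝ) + 1 ≤ m := by
      exact_mod_cast hk.trans (min_le_right n m)
    linarith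
  have h3 : (∑ j : Fin n, max (1 - α j) 0) ≤ n := by
    calc (∑ j : Fin n, max (1 - α j) 0) ≤ ∑ _j : Fin n, (1:ℝ) :=
          Finset.sum_le_sum fun j _ => max_le (by linarith [hα j]) zero_le_one
      _ = n := by simp
  have h4 : 0 ≤ ∑ j : Fin n, ∑ k : Fin (min n m), max (1 - α j - β k) 0 :=
    Finset.sum_nonneg fun j _ => sum_max_nonneg _
  nlinarith [Nat.cast_nonneg (α := ℝ) m]

lemma set_bdd (n m : ℕ) (c r : ℝ) :
    BddBelow {x : ℝ | ∃ (α : Fin n → ℝ) (β : Fin (min n m) → ℝ),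
      Feasible n m c r α β ∧ x = Fobj n m α β} :=
  ⟨-((m : ℝ) * n), by
    rintro x ⟨α, β, hf, rfl⟩
    exact Fobj_lb n m α β hf.1 hf.2.2.1⟩

lemma set_ne (n m : ℕ) (c r : ℝ) (hr : 0 ≤ r) :
    {x : ℝ | ∃ (α : Fin n → ℝ) (β : Fin (min n m) → ℝ),
      Feasible n m c r α β ∧ x = Fobj n m α β}.Nonempty := by
  refine ⟨Fobj n m (fun _ => 1) (fun _ => 1), fun _ => 1, fun _ => 1,
    ⟨fun _ => zero_le_one, monotone_const, fun _ => zero_le_one, monotone_const, ?_,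
      fun j k _ => by norm_num⟩, rfl⟩
  simpa using hr

lemma dDest_anti (n m : ℕ) (r : ℝ) (hr : 0 ≤ r) {t1 t2 : ℝ} (h : t1 ≤ t2) :
    dDest n m r t2 ≤ dDest n m r t1 := by
  refine csInf_le_csInf (set_bdd n m (1 - t2) r) (set_ne n m (1 - t1) r hr) ?_
  rintro x ⟨α, β, ⟨h1, h2, h3, h4, h5, h6⟩, rfl⟩
  refine ⟨α, β, ⟨h1, h2, h3, h4, ?_, h6⟩, rfl⟩
  have hS : 0 ≤ ∑ k : Fin (min n m), max (1 - β k) 0 := sum_max_nonneg _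
  nlinarith

theorem stmt_13 (n m : ℕ) (hn : 1 ≤ n) (hm : 1 ≤ m) (r : ℝ) (hr : 0 ≤ r) :
    (∀ t ∈ Set.Icc (0 : ℝ) 1, dSrc n m r t = dDest n m r (1 - t)) ∧
    AntitoneOn (fun t => dDest n m r t) (Set.Icc (0 : ℝ) 1) ∧
    IsGreatest ((fun t => min (dSrc n m r t) (dDest n m r t)) '' Set.Icc (0 : ℝ) 1)
      (dDest n m r (1 / 2)) := by
  refine ⟨fun t _ => src_eq_dest n m r t, fun t1 _ t2 _ h => dDest_anti n m r hr h, ?_, ?_⟩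
  · exact ⟨1/2, by norm_num, by
      show min (dSrc n m r (1/2)) (dDest n m r (1/2)) = dDest n m r (1/2)
      rw [src_eq_dest]; norm_num⟩
  · rintro x ⟨t, ht, rfl⟩
    rcases le_total t (1/2) with h | h
    · calc min (dSrc n m r t) (dDest n m r t) ≤ dSrc n m r t := min_le_left _ _
        _ = dDest n m r (1 - t) := src_eq_dest n m r t
        _ ≤ dDest n m r (1/2) := dDest_anti n m r hr (by linarith)
    · calc min (dSrc n m r t) (dDest n m r t) ≤ dDest n m r t := min_le_right _ _
        _ ≤ dDest n m r (1/2) := dDest_anti n m r hr h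
end

section
/- Let $n,m\ge 1$, let $H$ be an $n\times m$ complex matrix, let $P>0$, and let $Q$ be an $m\times m$ Hermitian positive semidefinite matrix with $\mathrm{Tr}(Q)\le P$. Then $\det(I_n+HQH^*)\le\det(I_n+P\,HH^*)$. -/
/-!
In the Loewner order `Q ≤ Tr(Q) • 1 ≤ P • 1`, since the largest eigenvalue of a positive
semidefinite matrix is at most the sum of all of them; conjugating by `H` gives
`1 + H Q Hᴴ ≤ 1 + P • H Hᴴ`. The determinant is monotone on positive definite matrices: if
`A = R²` with `R = √A`, then `det B = det A · det (R⁻¹ B R⁻¹)` and `R⁻¹ B R⁻¹ ≥ 1` has all its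
eigenvalues `≥ 1`.
-/

open Matrix
open scoped ComplexOrder MatrixOrder

namespace Matrix

variable {𝕜 n : Type*} [RCLike 𝕜] [Fintype n]

lemma mul_mul_conjTranspose_mono {m : Type*} [Fintype m] {A B : Matrix n n 𝕜} (hAB : A ≤ B)
    (H : Matrix m n 𝕜) : H * A * Hᴴ ≤ H * B * Hᴴ := by
  rw [le_iff, ← Matrix.sub_mul, ← Matrix.mul_sub]
  exact hAB.mul_mul_conjTranspose_same H

variable [DecidableEq n]

lemma PosSemidef.le_smul_one_of_trace_le {Q : Matrix n n 𝕜} (hQ : Q.PosSemidef) {c : ℝ}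
    (hc : Q.trace ≤ c) : Q ≤ (c : 𝕜) • 1 := by
  have hsum : ∑ i, hQ.1.eigenvalues i ≤ c := by
    rw [hQ.1.trace_eq_sum_eigenvalues] at hc
    exact_mod_cast hc
  have hQc : Q ≤ algebraMap ℝ (Matrix n n 𝕜) c := by
    refine le_algebraMap_of_spectrum_le (fun x hx => ?_) hQ.1
    obtain ⟨i, rfl⟩ := hQ.1.spectrum_real_eq_range_eigenvalues ▸ hx
    exact (Finset.single_le_sum (fun j _ => hQ.eigenvalues_nonneg j) (Finset.mem_univ i)).trans
      hsum
  rwa [Algebra.algebraMap_eq_smul_one, RCLike.real_smul_eq_coe_smul (K := 𝕜)] at hQc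

lemma one_le_det_of_one_le {C : Matrix n n 𝕜} (hC : 1 ≤ C) : 1 ≤ C.det := by
  have hH : C.IsHermitian := by simpa using hC.isHermitian.add isHermitian_one
  have hle : ∀ i, 1 ≤ hH.eigenvalues i := fun i =>
    (CFC.one_le_iff C hH.isSelfAdjoint).mp hC _ (hH.eigenvalues_mem_spectrum_real i)
  rw [hH.det_eq_prod_eigenvalues, ← RCLike.ofReal_prod]
  exact_mod_cast Finset.one_le_prod fun i _ => hle i

lemma PosDef.det_le_det_of_le {A B : Matrix n n 𝕜} (hA : A.PosDef) (hAB : A ≤ B) :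
    A.det ≤ B.det := by
  set R := CFC.sqrt A
  have hRR : R * R = A := CFC.sqrt_mul_sqrt_self A hA.posSemidef.nonneg
  have hR : IsStrictlyPositive R := (isStrictlyPositive_iff_posDef.mpr hA).sqrt
  have hdet : IsUnit R.det := (isUnit_iff_isUnit_det R).mp hR.isUnit
  set C := R⁻¹ * B * R⁻¹
  have hC : 1 ≤ C := by
    have hRinv : IsSelfAdjoint R⁻¹ := IsHermitian.inv hR.isSelfAdjoint
    have := hRinv.conjugate_le_conjugate hAB
    rwa [← hRR, ← mul_assoc, nonsing_inv_mul _ hdet, one_mul, mul_nonsing_inv _ hdet] at this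
  have hB : B = R * C * R := by
    simp only [C, ← mul_assoc, mul_nonsing_inv _ hdet, one_mul]
    rw [mul_assoc, nonsing_inv_mul _ hdet, mul_one]
  rw [hB, det_mul, det_mul, mul_right_comm, ← det_mul, hRR]
  exact le_mul_of_one_le_right hA.det_pos.le (one_le_det_of_one_le hC)

end Matrix

theorem stmt_17_general (n m : ℕ)
    (H : Matrix (Fin n) (Fin m) ℂ) (P : ℝ)
    (Q : Matrix (Fin m) (Fin m) ℂ) (hQ : Q.PosSemidef) (hTr : Q.trace ≤ (P : ℂ)) :
    (1 + H * Q * Hᴴ).det ≤ (1 + (P : ℂ) • (H * Hᴴ)).det := by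
  have hconj : H * Q * Hᴴ ≤ (P : ℂ) • (H * Hᴴ) := by
    simpa using mul_mul_conjTranspose_mono (hQ.le_smul_one_of_trace_le hTr) H
  exact (PosDef.one.add_posSemidef (hQ.mul_mul_conjTranspose_same H)).det_le_det_of_le
    (add_le_add_right hconj 1)

theorem stmt_17 (n m : ℕ) (hn : 1 ≤ n) (hm : 1 ≤ m)
    (H : Matrix (Fin n) (Fin m) ℂ) (P : ℝ) (hP : 0 < P)
    (Q : Matrix (Fin m) (Fin m) ℂ) (hQ : Q.PosSemidef) (hTr : Q.trace ≤ (P : ℂ)) :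
    (1 + H * Q * Hᴴ).det ≤ (1 + (P : ℂ) • (H * Hᴴ)).det :=
  stmt_17_general n m H P Q hQ hTr
end
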